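/- For π ∈ S_n, let π^r denote the reverse of π, i.e., π^r(i) = π(n+1−i). Then for any k ∈ {1,...,n}, the singleton {k} is a dominating set of the permutation graph G_π if and only if k is a strong fixed point of π^r. Consequently, the number of permutations of {1,...,n} with exactly t strong fixed points equals the number of permutations whose permutation graph has exactly t singleton dominating sets. -/

import Mathlib

/-- The permutation graph of `π`: vertices `0,…,n-1` (0-indexed version of `1,…,n`),
with `i < j` adjacent iff `π⁻¹ i > π⁻¹ j`. -/
def permGraph {n : ℕ} (π : Equiv.Perm (Fin n)) : SimpleGraph (Fin n) where
  Adj i j := (i < j ∧ π.symm j < π.symm i) ∨ (j < i ∧ π.symm i < π.symm j)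
  symm := ⟨fun i j h => by tauto⟩
  loopless := ⟨fun i h => by rcases h with ⟨h, _⟩ | ⟨h, _⟩ <;> exact lt_irrefl i h⟩

/-- `D` dominates `G`: every vertex is in `D` or adjacent to an element of `D`. -/
def Dominates {V : Type*} (G : SimpleGraph V) (D : Set V) : Prop :=
  ∀ v, v ∈ D ∨ ∃ d ∈ D, G.Adj v d

/-- The domination number: minimum cardinality of a dominating set. -/
noncomputable def domNumber {V : Type*} [Fintype V] (G : SimpleGraph V) : ℕ :=
  sInf {k | ∃ D : Finset V, D.card = k ∧ Dominates G ↑D}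

/-- Closed neighborhood `N[x]`. -/
def closedNbhd {V : Type*} (G : SimpleGraph V) (x : V) : Set V :=
  {y | y = x ∨ G.Adj x y}

/-- Degree of a vertex. -/
noncomputable def deg {V : Type*} (G : SimpleGraph V) (v : V) : ℕ :=
  (G.neighborSet v).ncard

/-- `k` is a strong fixed point of `π`. -/
def StrongFixedPoint {n : ℕ} (π : Equiv.Perm (Fin n)) (k : Fin n) : Prop :=
  (∀ j, j < k → π.symm j < π.symm k) ∧ (∀ i, k < i → π.symm k < π.symm i)

/-!
Reversing `π` reverses the order of positions, so `k` is a strong fixed point of `π^r` exactly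
when every `j < k` appears after `k` in `π` and every `i > k` appears before it, i.e. when `k`
is adjacent in `G_π` to every other vertex. Since `π ↦ π^r` is a bijection of `S_n`, the
counting statement follows.
-/

lemma dominates_singleton_iff {V : Type*} (G : SimpleGraph V) (k : V) :
    Dominates G {k} ↔ ∀ v, v ≠ k → G.Adj v k := by
  simp only [Dominates, Set.mem_singleton_iff, exists_eq_left]
  exact forall_congr' fun v => or_iff_not_imp_left

lemma permGraph_adj_iff_of_lt {n : ℕ} (π : Equiv.Perm (Fin n)) {i j : Fin n} (hij : i < j) :
    (permGraph π).Adj i j ↔ π.symm j < π.symm i := by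
  simp [permGraph, hij, hij.not_gt]

lemma permGraph_adj_comm_iff_of_lt {n : ℕ} (π : Equiv.Perm (Fin n)) {i j : Fin n}
    (hij : i < j) : (permGraph π).Adj j i ↔ π.symm j < π.symm i :=
  ((permGraph π).adj_comm j i).trans (permGraph_adj_iff_of_lt π hij)

lemma strongFixedPoint_revPerm_trans_iff {n : ℕ} (π : Equiv.Perm (Fin n)) (k : Fin n) :
    StrongFixedPoint (Fin.revPerm.trans π) k ↔
      (∀ j, j < k → π.symm k < π.symm j) ∧ (∀ i, k < i → π.symm i < π.symm k) := by
  simp only [StrongFixedPoint, Equiv.symm_trans_apply, Fin.revPerm_symm, Fin.revPerm_apply,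
    Fin.rev_lt_rev]

lemma dominates_permGraph_singleton_iff {n : ℕ} (π : Equiv.Perm (Fin n)) (k : Fin n) :
    Dominates (permGraph π) {k} ↔ StrongFixedPoint (Fin.revPerm.trans π) k := by
  rw [dominates_singleton_iff, strongFixedPoint_revPerm_trans_iff]
  constructor
  · intro hadj
    exact ⟨fun j hj => (permGraph_adj_iff_of_lt π hj).1 (hadj j hj.ne),
      fun i hi => (permGraph_adj_comm_iff_of_lt π hi).1 (hadj i hi.ne')⟩
  · rintro ⟨hbelow, habove⟩ v hv
    rcases hv.lt_or_gt with hvk | hkv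
    · exact (permGraph_adj_iff_of_lt π hvk).2 (hbelow v hvk)
    · exact (permGraph_adj_comm_iff_of_lt π hkv).2 (habove v hkv)

lemma revPerm_trans_revPerm_trans {n : ℕ} (π : Equiv.Perm (Fin n)) :
    Fin.revPerm.trans (Fin.revPerm.trans π) = π := by
  ext x
  simp

theorem dominating_singleton_iff_strong_fixed_point_of_reverse {n : ℕ} :
    (∀ (π : Equiv.Perm (Fin n)) (k : Fin n),
      Dominates (permGraph π) {k} ↔ StrongFixedPoint (Fin.revPerm.trans π) k) ∧
    ∀ t : ℕ,
      Nat.card {π : Equiv.Perm (Fin n) // {k | StrongFixedPoint π k}.ncard = t} =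
      Nat.card {π : Equiv.Perm (Fin n) // {k | Dominates (permGraph π) {k}}.ncard = t} := by
  refine ⟨dominates_permGraph_singleton_iff, fun t => ?_⟩
  refine Nat.card_congr (Equiv.subtypeEquiv (Equiv.mulRight Fin.revPerm) fun π => ?_)
  have hdom : {k | Dominates (permGraph (Fin.revPerm.trans π)) {k}} =
      {k | StrongFixedPoint π k} := by
    ext k
    exact (dominates_permGraph_singleton_iff _ k).trans (by rw [revPerm_trans_revPerm_trans]; rfl)
  show _ ↔ {k | Dominates (permGraph (Fin.revPerm.trans π)) {k}}.ncard = t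
  rw [hdom]
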